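/- arXiv:0812.4193 — 5 statements merged into one kernel-verified Lean document; each statement's English description precedes it below -/
import Mathlib

section
/- Let k ≥ 1 and r ≥ 0 be integers and Q₁, …, Q_k ∈ ℂ[z] polynomials with deg Qᵢ ≤ i + r for 1 ≤ i ≤ k and deg Q_k = k + r. Let n ≥ 1 and suppose 𝔏_n ≠ 𝔏_j for all j = 0, 1, …, n−1. Let V ∈ ℂ[z] with deg V ≤ r whose coefficient of z^r equals −𝔏_n. Then every nonzero polynomial S ∈ ℂ[z] with deg S ≤ n satisfying Σ_{i=1}^k Qᵢ·S^{(i)} + V·S = 0 has degree exactly n, and any two nonzero such solutions are scalar multiples of one another. -/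
open Polynomial

/-- The `n`-th diagonal coefficient `𝔏ₙ = Σ_{i=1}^k n(n−1)⋯(n−i+1)·Aᵢ`,
where `Aᵢ` is the coefficient of `z^{i+r}` in `Qᵢ`. -/
noncomputable def diagCoeff (k r : ℕ) (Q : ℕ → Polynomial ℂ) (n : ℕ) : ℂ :=
  ∑ i ∈ Finset.Icc 1 k, (n.descFactorial i : ℂ) * (Q i).coeff (i + r)

/-!
Write `𝔡_V S = Σ Qᵢ S⁽ⁱ⁾ + V S`. Since `deg Qᵢ ≤ i + r` and `deg V ≤ r`, the coefficient of
`z^{m+r}` in `𝔡_V S` for `S` of degree `m` is `(𝔏_m + V_r)` times the leading coefficient of `S`.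
With `V_r = -𝔏_n` and `𝔏_m ≠ 𝔏_n` for `m < n`, a nonzero solution of degree `≤ n` must have
degree exactly `n`. Then the solutions of degree `≤ n` form a space on which the `z^n`-coefficient
is injective, hence a space of dimension at most one.
-/

section Operator

variable {R : Type*} [CommSemiring R]

noncomputable def lameOp (k : ℕ) (Q : ℕ → R[X]) (V : R[X]) : R[X] →ₗ[R] R[X] :=
  ∑ i ∈ Finset.Icc 1 k, LinearMap.mulLeft R (Q i) ∘ₗ derivative ^ i + LinearMap.mulLeft R V

theorem lameOp_apply (k : ℕ) (Q : ℕ → R[X]) (V S : R[X]) :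
    lameOp k Q V S = ∑ i ∈ Finset.Icc 1 k, Q i * derivative^[i] S + V * S := by
  simp [lameOp, Module.End.pow_apply]

theorem coeff_mul_iterate_derivative_natDegree_add {P : R[X]} {i r : ℕ}
    (hP : P.degree ≤ (i + r : ℕ)) (S : R[X]) :
    (P * derivative^[i] S).coeff (S.natDegree + r) =
      S.natDegree.descFactorial i * P.coeff (i + r) * S.leadingCoeff := by
  set m := S.natDegree
  by_cases him : i ≤ m
  · rw [show m + r = (i + r) + (m - i) by omega,
      coeff_mul_add_eq_of_natDegree_le (natDegree_le_iff_degree_le.mpr hP)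
        (natDegree_iterate_derivative S i),
      coeff_iterate_derivative, Nat.sub_add_cancel him, nsmul_eq_mul, leadingCoeff]
    ring
  · rw [iterate_derivative_eq_zero (by omega), mul_zero, coeff_zero,
      Nat.descFactorial_eq_zero_iff_lt.mpr (by omega), Nat.cast_zero, zero_mul, zero_mul]

theorem coeff_mul_natDegree_add {V : R[X]} {r : ℕ} (hV : V.degree ≤ (r : ℕ)) (S : R[X]) :
    (V * S).coeff (S.natDegree + r) = V.coeff r * S.leadingCoeff := by
  rw [add_comm, coeff_mul_add_eq_of_natDegree_le (natDegree_le_iff_degree_le.mpr hV) le_rfl,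
    leadingCoeff]

end Operator

theorem coeff_lameOp_natDegree_add {k r : ℕ} {Q : ℕ → ℂ[X]}
    (hdeg : ∀ i, 1 ≤ i → i ≤ k → (Q i).degree ≤ (i + r : ℕ))
    {V : ℂ[X]} (hV : V.degree ≤ (r : ℕ)) (S : ℂ[X]) :
    (lameOp k Q V S).coeff (S.natDegree + r) =
      (diagCoeff k r Q S.natDegree + V.coeff r) * S.leadingCoeff := by
  have hsum : ∀ i ∈ Finset.Icc 1 k, (Q i * derivative^[i] S).coeff (S.natDegree + r) =
      S.natDegree.descFactorial i * (Q i).coeff (i + r) * S.leadingCoeff := fun i hi =>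
    coeff_mul_iterate_derivative_natDegree_add
      (hdeg i (Finset.mem_Icc.mp hi).1 (Finset.mem_Icc.mp hi).2) S
  rw [lameOp_apply, coeff_add, finsetSum_coeff, Finset.sum_congr rfl hsum,
    coeff_mul_natDegree_add hV, diagCoeff, add_mul, Finset.sum_mul]

theorem natDegree_eq_of_lameOp_eq_zero {k r : ℕ} {Q : ℕ → ℂ[X]}
    (hdeg : ∀ i, 1 ≤ i → i ≤ k → (Q i).degree ≤ (i + r : ℕ)) {n : ℕ}
    (hnonres : ∀ j < n, diagCoeff k r Q n ≠ diagCoeff k r Q j)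
    {V : ℂ[X]} (hV : V.degree ≤ (r : ℕ)) (hVr : V.coeff r = -diagCoeff k r Q n)
    {S : ℂ[X]} (hS : S ≠ 0) (hSn : S.natDegree ≤ n) (hLS : lameOp k Q V S = 0) :
    S.natDegree = n := by
  by_contra hne
  have hcoeff := coeff_lameOp_natDegree_add hdeg hV S
  rw [hLS, coeff_zero, hVr, eq_comm, mul_eq_zero, add_neg_eq_zero] at hcoeff
  rcases hcoeff with hdiag | hlc
  · exact hnonres _ (lt_of_le_of_ne hSn hne) hdiag.symm
  · exact hS (leadingCoeff_eq_zero.mp hlc)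

theorem exists_smul_eq_of_ker_natDegree_eq {K : Type*} [Field K] (L : K[X] →ₗ[K] K[X]) {n : ℕ}
    (hL : ∀ S, S ≠ 0 → S.natDegree ≤ n → L S = 0 → S.natDegree = n)
    {S₁ S₂ : K[X]} (h₁ : S₁ ≠ 0) (hd₁ : S₁.natDegree ≤ n) (hd₂ : S₂.natDegree ≤ n)
    (hL₁ : L S₁ = 0) (hL₂ : L S₂ = 0) :
    ∃ c : K, S₂ = c • S₁ := by
  have hc₁ : S₁.coeff n ≠ 0 := by
    rw [← hL S₁ h₁ hd₁ hL₁]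
    exact mt leadingCoeff_eq_zero.mp h₁
  refine ⟨S₂.coeff n / S₁.coeff n, ?_⟩
  set T := S₂ - (S₂.coeff n / S₁.coeff n) • S₁
  have hTn : T.coeff n = 0 := by
    simp only [T, coeff_sub, coeff_smul, smul_eq_mul, div_mul_cancel₀ _ hc₁, sub_self]
  by_contra hne
  have hT : T ≠ 0 := sub_ne_zero.mpr hne
  have hdT : T.natDegree ≤ n :=
    (natDegree_sub_le _ _).trans (max_le hd₂ ((natDegree_smul_le _ _).trans hd₁))
  have hLT : L T = 0 := by simp only [T, map_sub, map_smul, hL₁, hL₂, smul_zero, sub_zero]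
  rw [← hL T hT hdT hLT] at hTn
  exact hT (leadingCoeff_eq_zero.mp hTn)

theorem stmt_5_general (k r : ℕ) (Q : ℕ → Polynomial ℂ)
    (hdeg : ∀ i, 1 ≤ i → i ≤ k → (Q i).degree ≤ (i + r : ℕ))
    (n : ℕ)
    (hnonres : ∀ j < n, diagCoeff k r Q n ≠ diagCoeff k r Q j)
    (V : Polynomial ℂ) (hV : V.degree ≤ (r : ℕ))
    (hVr : V.coeff r = -diagCoeff k r Q n) :
    (∀ S : Polynomial ℂ, S ≠ 0 → S.natDegree ≤ n →
      ∑ i ∈ Finset.Icc 1 k, Q i * (Polynomial.derivative^[i] S) + V * S = 0 →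
      S.natDegree = n) ∧
    (∀ S₁ S₂ : Polynomial ℂ, S₁ ≠ 0 → S₂ ≠ 0 →
      S₁.natDegree ≤ n → S₂.natDegree ≤ n →
      ∑ i ∈ Finset.Icc 1 k, Q i * (Polynomial.derivative^[i] S₁) + V * S₁ = 0 →
      ∑ i ∈ Finset.Icc 1 k, Q i * (Polynomial.derivative^[i] S₂) + V * S₂ = 0 →
      ∃ c : ℂ, S₂ = c • S₁) := by
  have hker : ∀ S, S ≠ 0 → S.natDegree ≤ n → lameOp k Q V S = 0 → S.natDegree = n :=
    fun S hS hSn => natDegree_eq_of_lameOp_eq_zero hdeg hnonres hV hVr hS hSn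
  refine ⟨fun S hS hSn hLS => hker S hS hSn (by rwa [lameOp_apply]), ?_⟩
  intro S₁ S₂ h₁ _ hd₁ hd₂ hL₁ hL₂
  rw [← lameOp_apply] at hL₁ hL₂
  exact exists_smul_eq_of_ker_natDegree_eq _ hker h₁ hd₁ hd₂ hL₁ hL₂

theorem stmt_5 (k r : ℕ) (hk : 1 ≤ k) (Q : ℕ → Polynomial ℂ)
    (hdeg : ∀ i, 1 ≤ i → i ≤ k → (Q i).degree ≤ (i + r : ℕ))
    (hQk : (Q k).degree = (k + r : ℕ))
    (n : ℕ) (hn : 1 ≤ n)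
    (hnonres : ∀ j < n, diagCoeff k r Q n ≠ diagCoeff k r Q j)
    (V : Polynomial ℂ) (hV : V.degree ≤ (r : ℕ))
    (hVr : V.coeff r = -diagCoeff k r Q n) :
    (∀ S : Polynomial ℂ, S ≠ 0 → S.natDegree ≤ n →
      ∑ i ∈ Finset.Icc 1 k, Q i * (Polynomial.derivative^[i] S) + V * S = 0 →
      S.natDegree = n) ∧
    (∀ S₁ S₂ : Polynomial ℂ, S₁ ≠ 0 → S₂ ≠ 0 →
      S₁.natDegree ≤ n → S₂.natDegree ≤ n →
      ∑ i ∈ Finset.Icc 1 k, Q i * (Polynomial.derivative^[i] S₁) + V * S₁ = 0 →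
      ∑ i ∈ Finset.Icc 1 k, Q i * (Polynomial.derivative^[i] S₂) + V * S₂ = 0 →
      ∃ c : ℂ, S₂ = c • S₁) :=
  stmt_5_general k r Q hdeg n hnonres V hV hVr
end

section
/- Let k ≥ 1 and r ≥ 0 be integers and Q₁, …, Q_k ∈ ℂ[z] polynomials with deg Qᵢ ≤ i + r for 1 ≤ i ≤ k and deg Q_k = k + r. There exist a natural number N₀ and a real number R₀ > 0 such that for all n ≥ N₀ the following holds: if V ∈ ℂ[z] with deg V ≤ r and a nonzero polynomial S ∈ ℂ[z] of degree exactly n satisfy Σ_{i=1}^k Qᵢ·S^{(i)} + V·S = 0, then every root of V and every root of S has modulus at most R₀. -/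
/-!
Let `w` lie at least as far from the origin as every root of `S`. In the logarithmic derivative
`w S'(w) / S(w) = ∑ w / (w - ζ)` every term has real part `≥ 1/2`, so
`deg S · ‖S(w)‖ ≤ 2‖w‖ ‖S'(w)‖`. By Gauss–Lucas the roots of every derivative of `S` stay in the
same disc, hence `(n - k + 1)^(k - i) ‖S⁽ⁱ⁾(w)‖ ≤ (2‖w‖)^(k - i) ‖S⁽ᵏ⁾(w)‖` for `i ≤ k`.

If `V(w) S(w) = 0`, the equation at `w` reads `Q_k(w) S⁽ᵏ⁾(w) = -∑_{i<k} Q_i(w) S⁽ⁱ⁾(w)`.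
As `‖Q_i(w)‖ ‖w‖^(k - i) = O(‖Q_k(w)‖)` when `w → ∞`, for `n` and `‖w‖` large this forces
`S⁽ᵏ⁾(w) = 0`, so `S, …, S⁽ᵏ⁾` all vanish at `w`; differentiating the equation until the first
nonvanishing derivative of `S` then gives `Q_k(w) = 0`, impossible for `‖w‖` large. Applied to a
root of `S` of maximal modulus, and then to a root of `V`, this bounds all the roots.
-/

open Polynomial Filter Bornology Asymptotics

theorem Complex.half_le_re_div_sub {w ζ : ℂ} (h : ‖ζ‖ ≤ ‖w‖) (hne : ζ ≠ w) :
    1 / 2 ≤ (w / (w - ζ)).re := by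
  have hpos : 0 < normSq (w - ζ) := normSq_pos.2 (sub_ne_zero.2 hne.symm)
  have hsq : ‖ζ‖ ^ 2 ≤ ‖w‖ ^ 2 := pow_le_pow_left₀ (norm_nonneg ζ) h 2
  simp only [Complex.sq_norm, normSq_apply] at hsq
  rw [div_re, ← add_div, le_div_iff₀ hpos, normSq_apply]
  simp only [sub_re, sub_im]
  nlinarith

namespace Polynomial

theorem natDegree_mul_norm_eval_le (P : ℂ[X]) {w : ℂ} (h : ∀ z ∈ P.roots, ‖z‖ ≤ ‖w‖) :
    P.natDegree * ‖P.eval w‖ ≤ 2 * ‖w‖ * ‖P.derivative.eval w‖ := by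
  by_cases hPw : P.eval w = 0
  · simp only [hPw, norm_zero, mul_zero]
    positivity
  have hlog : w * P.derivative.eval w / P.eval w = (P.roots.map fun ζ ↦ w / (w - ζ)).sum := by
    rw [mul_div_assoc, (IsAlgClosed.splits P).eval_derivative_div_eval_of_ne_zero hPw,
      ← Multiset.sum_map_mul_left]
    simp only [mul_one_div]
  have hre : (P.natDegree : ℝ) / 2 ≤ (w * P.derivative.eval w / P.eval w).re := by
    rw [hlog, ← Complex.reLm_coe, map_multiset_sum, ← IsAlgClosed.card_roots_eq_natDegree,
      ← Multiset.card_map (fun ζ ↦ w / (w - ζ)), ← Multiset.card_map Complex.reLm,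
      div_eq_mul_one_div, ← nsmul_eq_mul]
    refine Multiset.card_nsmul_le_sum fun x hx ↦ ?_
    simp only [Multiset.mem_map, exists_exists_and_eq_and] at hx
    obtain ⟨ζ, hζ, rfl⟩ := hx
    exact Complex.half_le_re_div_sub (h ζ hζ) fun hζw ↦ hPw (mem_roots'.1 (hζw ▸ hζ)).2
  have hnorm := hre.trans (Complex.re_le_norm _)
  rw [norm_div, norm_mul, le_div_iff₀ (norm_pos_iff.2 hPw)] at hnorm
  linarith

theorem norm_le_of_mem_roots_derivative {P : ℂ[X]} {c : ℝ} (h : ∀ z ∈ P.roots, ‖z‖ ≤ c) {z : ℂ}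
    (hz : z ∈ P.derivative.roots) : ‖z‖ ≤ c := by
  have hP' : P.derivative ≠ 0 := ne_zero_of_mem_roots hz
  have hdeg : 0 < P.degree := by
    by_contra! hle
    exact hP' (derivative_of_natDegree_zero (natDegree_eq_zero_iff_degree_le_zero.2 hle))
  have hball : P.rootSet ℂ ⊆ Metric.closedBall 0 c := fun ζ hζ ↦ by
    rw [mem_rootSet, coe_aeval_eq_eval] at hζ
    simpa using h ζ (mem_roots'.2 hζ)
  have hz' : z ∈ P.derivative.rootSet ℂ :=
    mem_rootSet.2 (by simpa [coe_aeval_eq_eval] using mem_roots'.1 hz)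
  simpa using convexHull_min hball (convex_closedBall 0 c)
    (rootSet_derivative_subset_convexHull_rootSet hdeg hz')

theorem norm_le_of_mem_roots_iterate_derivative {P : ℂ[X]} {c : ℝ} (h : ∀ z ∈ P.roots, ‖z‖ ≤ c)
    (j : ℕ) {z : ℂ} (hz : z ∈ (derivative^[j] P).roots) : ‖z‖ ≤ c := by
  induction j generalizing z with
  | zero => exact h z hz
  | succ j ih =>
    rw [Function.iterate_succ_apply'] at hz
    exact norm_le_of_mem_roots_derivative (fun ζ hζ ↦ ih hζ) hz

theorem natDegree_iterate_derivative_eq {R : Type*} [Semiring R] [IsAddTorsionFree R] (p : R[X])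
    (j : ℕ) : (derivative^[j] p).natDegree = p.natDegree - j := by
  induction j with
  | zero => rfl
  | succ j ih => rw [Function.iterate_succ_apply', natDegree_derivative, ih, Nat.sub_sub]

theorem mul_norm_eval_iterate_derivative_le {S : ℂ[X]} {w : ℂ} (h : ∀ z ∈ S.roots, ‖z‖ ≤ ‖w‖)
    {m j : ℕ} (hm : m + j ≤ S.natDegree) :
    m * ‖(derivative^[j] S).eval w‖ ≤ 2 * ‖w‖ * ‖(derivative^[j + 1] S).eval w‖ := by
  have hdeg : (m : ℝ) ≤ (derivative^[j] S).natDegree := by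
    rw [natDegree_iterate_derivative_eq]
    exact_mod_cast Nat.le_sub_of_add_le hm
  rw [Function.iterate_succ_apply']
  exact (mul_le_mul_of_nonneg_right hdeg (norm_nonneg _)).trans
    (natDegree_mul_norm_eval_le _ fun z hz ↦ norm_le_of_mem_roots_iterate_derivative h j hz)

theorem pow_mul_norm_eval_iterate_derivative_le {S : ℂ[X]} {w : ℂ}
    (h : ∀ z ∈ S.roots, ‖z‖ ≤ ‖w‖) {m i d : ℕ} (hm : m + i + d ≤ S.natDegree + 1) :
    (m : ℝ) ^ d * ‖(derivative^[i] S).eval w‖ ≤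
      (2 * ‖w‖) ^ d * ‖(derivative^[i + d] S).eval w‖ := by
  induction d generalizing i with
  | zero => simp
  | succ d ih =>
    calc (m : ℝ) ^ (d + 1) * ‖(derivative^[i] S).eval w‖
        = (m : ℝ) ^ d * (m * ‖(derivative^[i] S).eval w‖) := by ring
      _ ≤ (m : ℝ) ^ d * (2 * ‖w‖ * ‖(derivative^[i + 1] S).eval w‖) :=
        mul_le_mul_of_nonneg_left
          (mul_norm_eval_iterate_derivative_le (m := m) (j := i) h (by omega)) (by positivity)
      _ = 2 * ‖w‖ * ((m : ℝ) ^ d * ‖(derivative^[i + 1] S).eval w‖) := by ring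
      _ ≤ 2 * ‖w‖ * ((2 * ‖w‖) ^ d * ‖(derivative^[i + 1 + d] S).eval w‖) :=
        mul_le_mul_of_nonneg_left (ih (i := i + 1) (by omega)) (by positivity)
      _ = (2 * ‖w‖) ^ (d + 1) * ‖(derivative^[i + (d + 1)] S).eval w‖ := by
        rw [show i + 1 + d = i + (d + 1) by omega]
        ring

theorem eval_iterate_derivative_mul_of_forall_lt {R : Type*} [CommSemiring R] {p q : R[X]} {z : R}
    {d : ℕ} (h : ∀ l < d, (derivative^[l] q).eval z = 0) :
    (derivative^[d] (p * q)).eval z = p.eval z * (derivative^[d] q).eval z := by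
  rw [iterate_derivative_mul, eval_finsetSum, Finset.sum_range_succ,
    Finset.sum_eq_zero fun l hl ↦ by simp [h l (Finset.mem_range.1 hl)]]
  simp

theorem exists_eval_iterate_derivative_ne_zero {R : Type*} [Semiring R] [IsAddTorsionFree R]
    {S : R[X]} (hS : S ≠ 0) (z : R) :
    ∃ t, (derivative^[t] S).eval z ≠ 0 := by
  refine ⟨S.natDegree, ?_⟩
  rw [eq_C_of_natDegree_eq_zero (p := derivative^[S.natDegree] S)
      (by rw [natDegree_iterate_derivative_eq, Nat.sub_self]), eval_C,
    coeff_iterate_derivative, zero_add, Nat.descFactorial_self]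
  exact smul_ne_zero (Nat.factorial_ne_zero _) (leadingCoeff_ne_zero.2 hS)

theorem eval_eq_zero_of_forall_le_eval_iterate_derivative_eq_zero {R : Type*} [CommRing R]
    [IsDomain R] [IsAddTorsionFree R] {k : ℕ} (hk : 1 ≤ k) {Q : ℕ → R[X]} {V S : R[X]} (hS : S ≠ 0)
    (hE : ∑ i ∈ Finset.Icc 1 k, Q i * derivative^[i] S + V * S = 0) {z : R}
    (hz : ∀ j ≤ k, (derivative^[j] S).eval z = 0) : (Q k).eval z = 0 := by
  classical
  have hex := exists_eval_iterate_derivative_ne_zero hS z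
  set t := Nat.find hex
  have hmin : ∀ j < t, (derivative^[j] S).eval z = 0 :=
    fun j hj ↦ not_not.1 (Nat.find_min hex hj)
  have hkt : k < t := lt_of_not_ge fun h ↦ Nat.find_spec hex (hz t h)
  -- The `(t - k)`-th derivative of the equation at `z` keeps only `Q k (z) * S⁽ᵗ⁾(z)`.
  have hD := congrArg (fun p ↦ (derivative^[t - k] p).eval z) hE
  simp only [iterate_map_add, iterate_derivative_sum, iterate_derivative_zero, eval_add,
    eval_finsetSum, eval_zero] at hD
  have hterm : ∀ i ∈ Finset.Icc 1 k, (derivative^[t - k] (Q i * derivative^[i] S)).eval z =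
      (Q i).eval z * (derivative^[t - k + i] S).eval z := fun i hi ↦ by
    rw [Finset.mem_Icc] at hi
    rw [eval_iterate_derivative_mul_of_forall_lt, ← Function.iterate_add_apply]
    intro l hl
    rw [← Function.iterate_add_apply]
    exact hmin _ (by omega)
  rw [Finset.sum_congr rfl hterm, Finset.sum_eq_single_of_mem k
      (Finset.mem_Icc.2 ⟨hk, le_rfl⟩) fun i hi hik ↦ by
        rw [Finset.mem_Icc] at hi
        rw [hmin _ (by omega), mul_zero],
    eval_iterate_derivative_mul_of_forall_lt fun l hl ↦ hmin l (by omega),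
    hmin (t - k) (by omega), mul_zero, add_zero, Nat.sub_add_cancel hkt.le] at hD
  exact (mul_eq_zero.1 hD).resolve_right (Nat.find_spec hex)

section NormedField

variable {𝕜 : Type*} [NormedField 𝕜]

theorem exists_sum_norm_eval_mul_pow_le {ι : Type*} (s : Finset ι) (P : ι → 𝕜[X]) (e : ι → ℕ)
    {Q : 𝕜[X]} (h : ∀ i ∈ s, (P i).degree + e i ≤ Q.degree) :
    ∃ C, ∀ᶠ w in cobounded 𝕜, ∑ i ∈ s, ‖(P i).eval w‖ * ‖w‖ ^ e i ≤ C * ‖Q.eval w‖ := by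
  have hO : (fun w ↦ ∑ i ∈ s, ‖(P i).eval w‖ * ‖w‖ ^ e i) =O[cobounded 𝕜] Q.eval := by
    refine IsBigO.fun_sum fun i hi ↦ ?_
    have hdeg : (P i * X ^ e i).degree ≤ Q.degree :=
      (degree_mul_le _ _).trans (by rw [degree_X_pow]; exact h i hi)
    simpa using (isBigO_cobounded_of_degree_le hdeg).norm_left
  obtain ⟨C, hC⟩ := hO.bound
  exact ⟨C, hC.mono fun w hw ↦ (le_abs_self _).trans (by simpa using hw)⟩

theorem eventually_cobounded_eval_ne_zero {Q : 𝕜[X]} (hQ : Q ≠ 0) :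
    ∀ᶠ w in cobounded 𝕜, Q.eval w ≠ 0 :=
  (finite_setOfPred_isRoot hQ).isBounded

theorem norm_le_of_mem_roots_of_forall_eval_ne_zero {S : 𝕜[X]} {R : ℝ}
    (h : ∀ w, R < ‖w‖ → (∀ z ∈ S.roots, ‖z‖ ≤ ‖w‖) → S.eval w ≠ 0) {z : 𝕜} (hz : z ∈ S.roots) :
    ‖z‖ ≤ R := by
  obtain ⟨z₀, hz₀, hmax⟩ :=
    Multiset.exists_max_image (‖·‖) (s := S.roots) (by rintro h; simp [h] at hz)
  by_contra! hlt
  exact h z₀ (hlt.trans_le (hmax z hz)) hmax (mem_roots'.1 hz₀).2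

end NormedField

section Dominance

variable {k : ℕ} {Q : ℕ → ℂ[X]} {S : ℂ[X]} {w : ℂ} {C : ℝ}

theorem eval_mul_eval_iterate_derivative_eq_zero (hk : 1 ≤ k) (hkn : k ≤ S.natDegree)
    (hroots : ∀ z ∈ S.roots, ‖z‖ ≤ ‖w‖) (hC : 2 ^ k * C < (S.natDegree - k + 1 : ℕ))
    (hdom : ∑ i ∈ Finset.Ico 1 k, ‖(Q i).eval w‖ * ‖w‖ ^ (k - i) ≤ C * ‖(Q k).eval w‖)
    (hsum : ∑ i ∈ Finset.Icc 1 k, (Q i).eval w * (derivative^[i] S).eval w = 0) :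
    (Q k).eval w * (derivative^[k] S).eval w = 0 := by
  set m := S.natDegree - k + 1
  set a : ℕ → ℝ := fun i ↦ ‖(derivative^[i] S).eval w‖
  rw [← Finset.Ico_insert_right hk, Finset.sum_insert (by simp)] at hsum
  have hterm : ∀ i ∈ Finset.Ico 1 k,
      m * (‖(Q i).eval w‖ * a i) ≤ 2 ^ k * (‖(Q i).eval w‖ * ‖w‖ ^ (k - i)) * a k := by
    intro i hi
    rw [Finset.mem_Ico] at hi
    have hchain := pow_mul_norm_eval_iterate_derivative_le hroots (m := m) (i := i) (d := k - i)
      (by omega)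
    rw [Nat.add_sub_cancel' hi.2.le] at hchain
    calc (m : ℝ) * (‖(Q i).eval w‖ * a i)
        ≤ (m : ℝ) ^ (k - i) * (‖(Q i).eval w‖ * a i) := by
          gcongr
          exact le_self_pow₀ (by norm_cast; omega) (by omega)
      _ = ‖(Q i).eval w‖ * ((m : ℝ) ^ (k - i) * a i) := by ring
      _ ≤ ‖(Q i).eval w‖ * ((2 * ‖w‖) ^ (k - i) * a k) := by gcongr
      _ = 2 ^ (k - i) * (‖(Q i).eval w‖ * ‖w‖ ^ (k - i)) * a k := by ring
      _ ≤ 2 ^ k * (‖(Q i).eval w‖ * ‖w‖ ^ (k - i)) * a k := by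
          gcongr
          exacts [one_le_two, by omega]
  have hmain : m * (‖(Q k).eval w‖ * a k) ≤ 2 ^ k * C * (‖(Q k).eval w‖ * a k) :=
    calc (m : ℝ) * (‖(Q k).eval w‖ * a k)
        = m * ‖∑ i ∈ Finset.Ico 1 k, (Q i).eval w * (derivative^[i] S).eval w‖ := by
          rw [← norm_mul, eq_neg_of_add_eq_zero_left hsum, norm_neg]
      _ ≤ m * ∑ i ∈ Finset.Ico 1 k, ‖(Q i).eval w‖ * a i := by
          gcongr
          exact (norm_sum_le _ _).trans_eq (by simp only [norm_mul, a])
      _ ≤ ∑ i ∈ Finset.Ico 1 k, 2 ^ k * (‖(Q i).eval w‖ * ‖w‖ ^ (k - i)) * a k := by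
          rw [Finset.mul_sum]
          exact Finset.sum_le_sum hterm
      _ = 2 ^ k * (∑ i ∈ Finset.Ico 1 k, ‖(Q i).eval w‖ * ‖w‖ ^ (k - i)) * a k := by
          rw [← Finset.sum_mul, ← Finset.mul_sum]
      _ ≤ 2 ^ k * (C * ‖(Q k).eval w‖) * a k := by gcongr
      _ = 2 ^ k * C * (‖(Q k).eval w‖ * a k) := by ring
  have hnonneg : 0 ≤ ‖(Q k).eval w‖ * a k := by positivity
  have hzero : ‖(Q k).eval w‖ * a k = 0 := le_antisymm (by nlinarith) hnonneg
  rwa [← norm_mul, norm_eq_zero] at hzero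

theorem eval_mul_eval_ne_zero_of_dominated (hk : 1 ≤ k) {V : ℂ[X]} (hS : S ≠ 0)
    (hE : ∑ i ∈ Finset.Icc 1 k, Q i * derivative^[i] S + V * S = 0) (hkn : k ≤ S.natDegree)
    (hroots : ∀ z ∈ S.roots, ‖z‖ ≤ ‖w‖) (hC : 2 ^ k * C < (S.natDegree - k + 1 : ℕ))
    (hQk : (Q k).eval w ≠ 0)
    (hdom : ∑ i ∈ Finset.Ico 1 k, ‖(Q i).eval w‖ * ‖w‖ ^ (k - i) ≤ C * ‖(Q k).eval w‖) :
    V.eval w * S.eval w ≠ 0 := by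
  intro hVS
  have hsum : ∑ i ∈ Finset.Icc 1 k, (Q i).eval w * (derivative^[i] S).eval w = 0 := by
    simpa [eval_finsetSum, hVS] using congrArg (eval w) hE
  have hSk : (derivative^[k] S).eval w = 0 := (mul_eq_zero.1
    (eval_mul_eval_iterate_derivative_eq_zero hk hkn hroots hC hdom hsum)).resolve_left hQk
  refine hQk (eval_eq_zero_of_forall_le_eval_iterate_derivative_eq_zero hk hS hE fun j hj ↦ ?_)
  have hchain := pow_mul_norm_eval_iterate_derivative_le hroots (m := S.natDegree - k + 1) (i := j)
    (d := k - j) (by omega)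
  rw [Nat.add_sub_cancel' hj, hSk, norm_zero, mul_zero] at hchain
  have hpos : (0 : ℝ) < ((S.natDegree - k + 1 : ℕ) : ℝ) ^ (k - j) := by positivity
  exact norm_le_zero_iff.1 (le_of_mul_le_mul_left (by rwa [mul_zero]) hpos)

end Dominance

end Polynomial

theorem stmt_12 (k r : ℕ) (hk : 1 ≤ k) (Q : ℕ → Polynomial ℂ)
    (hdeg : ∀ i, 1 ≤ i → i ≤ k → (Q i).degree ≤ (i + r : ℕ))
    (hQk : (Q k).degree = (k + r : ℕ)) :
    ∃ (N₀ : ℕ) (R₀ : ℝ), 0 < R₀ ∧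
      ∀ n ≥ N₀, ∀ V S : Polynomial ℂ, V.degree ≤ (r : ℕ) → S ≠ 0 →
        S.natDegree = n →
        ∑ i ∈ Finset.Icc 1 k, Q i * (Polynomial.derivative^[i] S) + V * S = 0 →
        (∀ z ∈ V.roots, ‖z‖ ≤ R₀) ∧ (∀ z ∈ S.roots, ‖z‖ ≤ R₀) := by
  have hQk0 : Q k ≠ 0 := ne_zero_of_coe_le_degree hQk.ge
  obtain ⟨C, hC⟩ := exists_sum_norm_eval_mul_pow_le (Finset.Ico 1 k) Q (k - ·) (Q := Q k)
    fun i hi ↦ by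
      rw [Finset.mem_Ico] at hi
      calc (Q i).degree + (k - i : ℕ) ≤ (i + r : ℕ) + (k - i : ℕ) := by
            gcongr
            exact hdeg i hi.1 hi.2.le
        _ = (Q k).degree := by rw [hQk]; norm_cast; omega
  obtain ⟨R, -, hR⟩ := hasBasis_cobounded_norm.eventually_iff.1
    ((eventually_cobounded_eval_ne_zero hQk0).and hC)
  refine ⟨k + ⌈2 ^ k * C⌉₊, max R 1, by positivity, fun n hn V S _ hS hSn hE ↦ ?_⟩
  have hCn : 2 ^ k * C < (S.natDegree - k + 1 : ℕ) :=
    (Nat.le_ceil _).trans_lt (by exact_mod_cast (by omega : ⌈2 ^ k * C⌉₊ < S.natDegree - k + 1))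
  have key (w : ℂ) (hw : max R 1 < ‖w‖) (hroots : ∀ z ∈ S.roots, ‖z‖ ≤ ‖w‖) :
      V.eval w * S.eval w ≠ 0 :=
    have hRw := @hR w (le_max_left R 1 |>.trans hw.le)
    eval_mul_eval_ne_zero_of_dominated hk hS hE (by omega) hroots hCn hRw.1 hRw.2
  have hSroots (z : ℂ) (hz : z ∈ S.roots) : ‖z‖ ≤ max R 1 :=
    norm_le_of_mem_roots_of_forall_eval_ne_zero
      (fun w hw hroots hSw ↦ key w hw hroots (by rw [hSw, mul_zero])) hz
  refine ⟨fun z hz ↦ ?_, hSroots⟩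
  by_contra! hz'
  exact key z hz' (fun ζ hζ ↦ (hSroots ζ hζ).trans hz'.le) (by rw [(mem_roots'.1 hz).2, zero_mul])
end

section
/- Let S ∈ ℂ[z] be a polynomial of degree n ≥ 1 all of whose roots lie in the closed disk of radius R₀ ≥ 0 centered at z₀ ∈ ℂ. Then for every z ∈ ℂ with |z − z₀| > R₀ one has n·|S(z)| ≤ 2·|z − z₀|·|S′(z)|. -/
/-!
For `z` outside the disk containing the roots `r` of `S`, the logarithmic derivative gives
`(z - z₀) S'(z) / S(z) = ∑ᵣ (z - z₀) / (z - r)`. Each summand `w` satisfies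
`|w - 1| = |r - z₀| / |z - r| ≤ |z - z₀| / |z - r| = |w|`, i.e. `Re w ≥ 1/2`,
so the sum has real part, hence modulus, at least `n / 2`.
-/

open Polynomial

namespace Complex

theorem half_le_re_of_norm_sub_one_le {w : ℂ} (h : ‖w - 1‖ ≤ ‖w‖) : 1 / 2 ≤ w.re := by
  have h2 := pow_le_pow_left₀ (norm_nonneg _) h 2
  rw [Complex.sq_norm, Complex.sq_norm, normSq_apply, normSq_apply, sub_re, sub_im, one_re,
    one_im] at h2
  nlinarith

theorem half_le_re_div_sub_s15 {z z₀ r : ℂ} (hzr : z ≠ r) (h : ‖r - z₀‖ ≤ ‖z - z₀‖) :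
    1 / 2 ≤ ((z - z₀) / (z - r)).re := by
  have hzr' : z - r ≠ 0 := sub_ne_zero.2 hzr
  apply half_le_re_of_norm_sub_one_le
  have hsub : (z - z₀) / (z - r) - 1 = (r - z₀) / (z - r) := by
    field_simp
    ring
  rw [hsub, norm_div, norm_div]
  exact div_le_div_of_nonneg_right h (norm_nonneg _)

end Complex

theorem Multiset.card_mul_le_norm_sum_of_le_re {s : Multiset ℂ} {c : ℝ}
    (h : ∀ w ∈ s, c ≤ w.re) : (card s : ℝ) * c ≤ ‖s.sum‖ := by
  have hsum := card_nsmul_le_sum (s := s.map Complex.re) (a := c) (by simpa using h)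
  rw [card_map, nsmul_eq_mul] at hsum
  calc (card s : ℝ) * c ≤ (s.map Complex.re).sum := hsum
    _ = s.sum.re := (map_multiset_sum Complex.reAddGroupHom s).symm
    _ ≤ ‖s.sum‖ := Complex.re_le_norm _

namespace Polynomial

theorem natDegree_mul_norm_eval_le_two_mul_norm_mul_norm_eval_derivative
    {S : ℂ[X]} {z₀ z : ℂ} (hroots : ∀ r ∈ S.roots, ‖r - z₀‖ ≤ ‖z - z₀‖) :
    S.natDegree * ‖S.eval z‖ ≤ 2 * ‖z - z₀‖ * ‖S.derivative.eval z‖ := by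
  by_cases hSz : S.eval z = 0
  · simp only [hSz, norm_zero, mul_zero]
    positivity
  set terms := S.roots.map fun r ↦ (z - z₀) / (z - r)
  have hlogDeriv : (z - z₀) * S.derivative.eval z = S.eval z * terms.sum := by
    rw [(IsAlgClosed.splits S).eval_derivative_eq_eval_mul_sum hSz, ← Multiset.sum_map_mul_left]
    simp only [terms, div_eq_mul_one_div (z - z₀), Multiset.sum_map_mul_left]
    ring
  have hterms : (S.natDegree : ℝ) * (1 / 2) ≤ ‖terms.sum‖ := by
    rw [← IsAlgClosed.card_roots_eq_natDegree, ← Multiset.card_map (fun r ↦ (z - z₀) / (z - r))]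
    refine Multiset.card_mul_le_norm_sum_of_le_re ?_
    simp only [Multiset.mem_map]
    rintro _ ⟨r, hr, rfl⟩
    exact Complex.half_le_re_div_sub_s15 (fun hzr ↦ hSz (hzr ▸ (mem_roots'.1 hr).2)) (hroots r hr)
  calc (S.natDegree : ℝ) * ‖S.eval z‖
      ≤ 2 * ‖terms.sum‖ * ‖S.eval z‖ := by gcongr; linarith
    _ = 2 * ‖z - z₀‖ * ‖S.derivative.eval z‖ := by
        rw [mul_assoc, ← norm_mul, mul_comm terms.sum, ← hlogDeriv, norm_mul, mul_assoc]

end Polynomial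

theorem stmt_15_general (S : Polynomial ℂ) (n : ℕ) (hdeg : S.degree = (n : ℕ))
    (z₀ : ℂ) (R₀ : ℝ)
    (hroots : ∀ w : ℂ, S.eval w = 0 → ‖w - z₀‖ ≤ R₀)
    (z : ℂ) (hz : R₀ < ‖z - z₀‖) :
    (n : ℝ) * ‖S.eval z‖ ≤
      2 * ‖z - z₀‖ * ‖(Polynomial.derivative S).eval z‖ := by
  rw [← natDegree_eq_of_degree_eq_some hdeg]
  exact natDegree_mul_norm_eval_le_two_mul_norm_mul_norm_eval_derivative fun r hr ↦
    ((hroots r (mem_roots'.1 hr).2).trans hz.le)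

theorem stmt_15 (S : Polynomial ℂ) (n : ℕ) (hn : 1 ≤ n) (hdeg : S.degree = (n : ℕ))
    (z₀ : ℂ) (R₀ : ℝ) (hR₀ : 0 ≤ R₀)
    (hroots : ∀ w : ℂ, S.eval w = 0 → ‖w - z₀‖ ≤ R₀)
    (z : ℂ) (hz : R₀ < ‖z - z₀‖) :
    (n : ℝ) * ‖S.eval z‖ ≤
      2 * ‖z - z₀‖ * ‖(Polynomial.derivative S).eval z‖ :=
  stmt_15_general S n hdeg z₀ R₀ hroots z hz
end

section
/- Let m₁ ≤ m₂ be natural numbers. For each s with 0 ≤ s ≤ m₂ − m₁ let E_s be the m₁ × m₂ complex matrix whose (i, j) entry is 1 if j = i + s and 0 otherwise. Then for any scalars c₀, c₁, …, c_{m₂−m₁} ∈ ℂ, not all zero, the matrix Σ_{s=0}^{m₂−m₁} c_s·E_s has rank m₁ (full rank). -/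
/-- The shift matrices `E_s` with `(i,j)` entry `1` if `j = i + s` and `0` otherwise. -/
def shiftMatrix (m₁ m₂ s : ℕ) : Matrix (Fin m₁) (Fin m₂) ℂ :=
  Matrix.of fun i j => if (j : ℕ) = (i : ℕ) + s then 1 else 0

/-!
Let `s₀` be the smallest index with `c s₀ ≠ 0`. The columns `s₀, s₀ + 1, …, s₀ + m₁ - 1` of
`∑ s, c s • E_s` form an upper triangular `m₁ × m₁` matrix with `c s₀` on the diagonal, so its
determinant `c s₀ ^ m₁` is nonzero and the rank is `m₁`.
-/

namespace Matrix

theorem rank_eq_card_height_of_isUpperTriangular_submatrix {K m n : Type*} [Field K]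
    [Fintype m] [LinearOrder m] [Fintype n] (A : Matrix m n K) (e : m → n)
    (hA : (A.submatrix id e).IsUpperTriangular) (hd : ∀ i, A i (e i) ≠ 0) :
    A.rank = Fintype.card m := by
  refine le_antisymm A.rank_le_card_height ?_
  have hdet : (A.submatrix id e).det ≠ 0 := by
    simpa [det_of_isUpperTriangular hA, Finset.prod_ne_zero_iff] using hd
  calc Fintype.card m = (A.submatrix id e).rank :=
        (rank_of_isUnit _ ((isUnit_iff_isUnit_det _).mpr hdet.isUnit)).symm
    _ ≤ A.rank := rank_submatrix_le A id e

end Matrix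

theorem sum_smul_shiftMatrix_apply {m₁ m₂ N : ℕ} (c : Fin N → ℂ) (i : Fin m₁) (j : Fin m₂) :
    (∑ s : Fin N, c s • shiftMatrix m₁ m₂ s) i j =
      ∑ s : Fin N, if (j : ℕ) = i + s then c s else 0 := by
  simp [shiftMatrix, Matrix.sum_apply]

theorem sum_smul_shiftMatrix_apply_shift {m₁ m₂ N : ℕ} (c : Fin N → ℂ) (s₀ : Fin N)
    (f : Fin m₁ → Fin m₂) (hf : ∀ i, (f i : ℕ) = i + s₀) (i : Fin m₁) :
    (∑ s : Fin N, c s • shiftMatrix m₁ m₂ s) i (f i) = c s₀ := by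
  rw [sum_smul_shiftMatrix_apply, Finset.sum_eq_single s₀]
  · simp [hf]
  · intro s _ hs
    rw [hf, if_neg]
    exact fun h => hs (Fin.ext (by omega))
  · simp

theorem isUpperTriangular_submatrix_sum_smul_shiftMatrix {m₁ m₂ N : ℕ} (c : Fin N → ℂ)
    (s₀ : Fin N) (hmin : ∀ s < s₀, c s = 0) (f : Fin m₁ → Fin m₂)
    (hf : ∀ i, (f i : ℕ) = i + s₀) :
    ((∑ s : Fin N, c s • shiftMatrix m₁ m₂ s).submatrix id f).IsUpperTriangular := by
  intro i k hki
  simp only [Matrix.submatrix_apply, id_eq, sum_smul_shiftMatrix_apply, hf]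
  refine Finset.sum_eq_zero fun s _ => ?_
  split_ifs with h
  · exact hmin s (Fin.lt_def.mpr (by have : (k : ℕ) < i := hki; omega))
  · rfl

theorem stmt_16 (m₁ m₂ : ℕ) (h : m₁ ≤ m₂)
    (c : Fin (m₂ - m₁ + 1) → ℂ) (hc : c ≠ 0) :
    (∑ s : Fin (m₂ - m₁ + 1), c s • shiftMatrix m₁ m₂ (s : ℕ)).rank = m₁ := by
  obtain ⟨s₀, hs₀, hmin⟩ : ∃ s₀, c s₀ ≠ 0 ∧ ∀ s < s₀, c s = 0 := by
    obtain ⟨s₀, hs₀, hmin⟩ := WellFounded.has_min wellFounded_lt {s | c s ≠ 0}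
      (Function.ne_iff.mp hc)
    exact ⟨s₀, hs₀, fun s hs => by_contra fun hcs => hmin s hcs hs⟩
  let f : Fin m₁ → Fin m₂ := fun i => ⟨i + s₀, by omega⟩
  have hf : ∀ i, (f i : ℕ) = i + s₀ := fun _ => rfl
  simpa using Matrix.rank_eq_card_height_of_isUpperTriangular_submatrix _ f
    (isUpperTriangular_submatrix_sum_smul_shiftMatrix c s₀ hmin f hf)
    (fun i => (sum_smul_shiftMatrix_apply_shift c s₀ f hf i).symm ▸ hs₀)
end

section
/- Let l ≥ 2 and n ≥ 2 be integers. (i) The polynomial V_n = −n(n−1)·z^{l−2} together with S_n = z^n satisfies z^l·S_n″ + V_n·S_n = 0. (ii) Conversely, if V ∈ ℂ[z] with deg V ≤ l − 2 and a nonzero polynomial S ∈ ℂ[z] of degree exactly n satisfy z^l·S″ + V·S = 0, then V = −n(n−1)·z^{l−2} and S = c·z^n for some nonzero c ∈ ℂ. -/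
/-!
Write `V S = -X^l S''`. The operator `X² d²/dX²` acts diagonally on monomials, `X^m ↦ m(m-1) X^m`,
so `X² S''` has trailing degree at least that of `S`; comparing trailing degrees then gives
`X^(l-2) ∣ V`, and `deg V ≤ l - 2` makes `V = v X^(l-2)`. Cancelling `X^(l-2)` leaves the Euler
equation `X² S'' + v S = 0`, i.e. `(m(m-1) + v) s_m = 0` for every coefficient `s_m` of `S`. The
leading coefficient gives `v = -n(n-1)`, and as `m ↦ m(m-1)` is strictly increasing below `n ≥ 2`,
every other coefficient vanishes.
-/

open Polynomial

namespace Polynomial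

section Semiring

variable {R : Type*} [Semiring R]

theorem eq_C_leadingCoeff_mul_X_pow_of_natDegree_le_natTrailingDegree {p : R[X]}
    (h : p.natDegree ≤ p.natTrailingDegree) : p = C p.leadingCoeff * X ^ p.natDegree := by
  ext m
  rw [coeff_C_mul_X_pow]
  obtain hm | rfl | hm := lt_trichotomy m p.natDegree
  · rw [if_neg hm.ne, coeff_eq_zero_of_lt_natTrailingDegree (hm.trans_le h)]
  · rw [if_pos rfl, leadingCoeff]
  · rw [if_neg hm.ne', coeff_eq_zero_of_natDegree_lt hm]

theorem coeff_X_pow_mul_iterate_derivative (p : R[X]) (k m : ℕ) :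
    (X ^ k * derivative^[k] p).coeff m = m.descFactorial k • p.coeff m := by
  rw [coeff_X_pow_mul']
  split_ifs with h
  · rw [coeff_iterate_derivative, Nat.sub_add_cancel h]
  · rw [Nat.descFactorial_eq_zero_iff_lt.mpr (not_le.mp h), zero_smul]

theorem X_pow_mul_iterate_derivative_X_pow (k n : ℕ) :
    X ^ k * derivative^[k] (X ^ n : R[X]) = C (n.descFactorial k : R) * X ^ n := by
  ext m
  rw [coeff_X_pow_mul_iterate_derivative, coeff_C_mul_X_pow, coeff_X_pow, nsmul_eq_mul]
  split_ifs with h <;> simp [h]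

theorem natTrailingDegree_le_natTrailingDegree_X_pow_mul_iterate_derivative {p : R[X]} {k : ℕ}
    (h : X ^ k * derivative^[k] p ≠ 0) :
    p.natTrailingDegree ≤ (X ^ k * derivative^[k] p).natTrailingDegree :=
  le_natTrailingDegree h fun m hm => by
    rw [coeff_X_pow_mul_iterate_derivative, coeff_eq_zero_of_lt_natTrailingDegree hm, smul_zero]

end Semiring

section Domain

variable {R : Type*} [CommRing R] [IsDomain R]

theorem le_natTrailingDegree_of_X_pow_mul_add_mul_eq_zero {D V S : R[X]} {a : ℕ}
    (hD : D ≠ 0) (hS : S ≠ 0) (hSD : S.natTrailingDegree ≤ D.natTrailingDegree)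
    (h : X ^ a * D + V * S = 0) : a ≤ V.natTrailingDegree := by
  have hXD : X ^ a * D ≠ 0 := mul_ne_zero (pow_ne_zero _ X_ne_zero) hD
  have hV : V ≠ 0 := by
    rintro rfl
    exact hXD (by simpa using h)
  have hord : a + D.natTrailingDegree = V.natTrailingDegree + S.natTrailingDegree := by
    rw [← natTrailingDegree_X_pow (R := R) a, ← natTrailingDegree_mul (pow_ne_zero _ X_ne_zero) hD,
      eq_neg_of_add_eq_zero_left h, natTrailingDegree_neg, natTrailingDegree_mul hV hS]
  omega

variable [CharZero R]

theorem X_pow_mul_iterate_derivative_ne_zero {p : R[X]} {k : ℕ} (hp : p ≠ 0)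
    (hk : k ≤ p.natDegree) : X ^ k * derivative^[k] p ≠ 0 := by
  intro h
  have := congrArg (coeff · p.natDegree) h
  rw [coeff_X_pow_mul_iterate_derivative, coeff_zero, nsmul_eq_mul] at this
  exact mul_ne_zero (Nat.cast_ne_zero.mpr (Nat.descFactorial_eq_zero_iff_lt.not.mpr hk.not_gt))
    (leadingCoeff_ne_zero.mpr hp) this

theorem eq_C_mul_X_pow_of_X_sq_mul_iterate_derivative_add_C_mul_eq_zero {S : R[X]} {v : R}
    {n : ℕ} (hSn : S.natDegree = n) (hn : 2 ≤ n)
    (h : X ^ 2 * derivative^[2] S + C v * S = 0) :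
    v = -(n * (n - 1) : R) ∧ S = C S.leadingCoeff * X ^ n := by
  have hcoeff : ∀ m, ((m.descFactorial 2 : R) + v) * S.coeff m = 0 := fun m => by
    simpa only [coeff_add, coeff_X_pow_mul_iterate_derivative, coeff_C_mul, nsmul_eq_mul, add_mul,
      coeff_zero] using congrArg (coeff · m) h
  have hS : S ≠ 0 := by
    rintro rfl
    rw [natDegree_zero] at hSn
    omega
  have hv : v = -(n.descFactorial 2 : R) := by
    have := hcoeff n
    rw [← hSn, mul_eq_zero, ← leadingCoeff, or_iff_left (leadingCoeff_ne_zero.mpr hS), hSn] at this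
    exact eq_neg_of_add_eq_zero_right this
  refine ⟨by rw [hv, Nat.cast_descFactorial_two], ?_⟩
  ext m
  rw [coeff_C_mul_X_pow]
  obtain hm | rfl | hm := lt_trichotomy m n
  · have hlt : m.descFactorial 2 < n.descFactorial 2 := by
      simp only [Nat.descFactorial, Nat.sub_zero, mul_one]
      calc (m - 1) * m ≤ (n - 1) * m := by gcongr
        _ < (n - 1) * n := by gcongr; omega
    have := hcoeff m
    rw [hv, ← sub_eq_add_neg, mul_eq_zero, sub_eq_zero, Nat.cast_inj] at this
    rw [if_neg hm.ne, this.resolve_left hlt.ne]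
  · rw [if_pos rfl, ← hSn, leadingCoeff]
  · rw [if_neg hm.ne', coeff_eq_zero_of_natDegree_lt (hSn ▸ hm)]

end Domain

end Polynomial

theorem stmt_19 (l n : ℕ) (hl : 2 ≤ l) (hn : 2 ≤ n) :
    ((X : Polynomial ℂ) ^ l *
        (Polynomial.derivative (Polynomial.derivative ((X : Polynomial ℂ) ^ n))) +
      (-(C ((n : ℂ) * ((n : ℂ) - 1))) * X ^ (l - 2)) * (X : Polynomial ℂ) ^ n = 0) ∧
    ∀ V S : Polynomial ℂ, V.degree ≤ ((l - 2 : ℕ) : WithBot ℕ) → S ≠ 0 →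
      S.natDegree = n →
      (X : Polynomial ℂ) ^ l * (Polynomial.derivative (Polynomial.derivative S)) +
        V * S = 0 →
      V = -(C ((n : ℂ) * ((n : ℂ) - 1))) * X ^ (l - 2) ∧
      ∃ c : ℂ, c ≠ 0 ∧ S = C c * X ^ n := by
  have hX : ∀ P : ℂ[X], X ^ l * derivative (derivative P) =
      X ^ (l - 2) * (X ^ 2 * derivative^[2] P) := fun P => by
    rw [← mul_assoc, ← pow_add, Nat.sub_add_cancel hl]
    rfl
  refine ⟨?_, fun V S hV hS0 hSn h => ?_⟩
  · rw [hX, X_pow_mul_iterate_derivative_X_pow, Nat.cast_descFactorial_two]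
    ring
  rw [hX] at h
  have hD := X_pow_mul_iterate_derivative_ne_zero hS0 (hSn ▸ hn)
  have hVord : l - 2 ≤ V.natTrailingDegree := le_natTrailingDegree_of_X_pow_mul_add_mul_eq_zero hD
    hS0 (natTrailingDegree_le_natTrailingDegree_X_pow_mul_iterate_derivative hD) h
  have hVdeg : V.natDegree ≤ l - 2 := natDegree_le_of_degree_le hV
  have hVmon := eq_C_leadingCoeff_mul_X_pow_of_natDegree_le_natTrailingDegree (hVdeg.trans hVord)
  rw [le_antisymm hVdeg (hVord.trans V.natTrailingDegree_le_natDegree)] at hVmon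
  have heuler : X ^ 2 * derivative^[2] S + C V.leadingCoeff * S = 0 := by
    rw [hVmon, mul_right_comm, mul_comm _ (X ^ (l - 2)), ← mul_add] at h
    exact (mul_eq_zero.mp h).resolve_left (pow_ne_zero _ X_ne_zero)
  obtain ⟨hv, hSmon⟩ :=
    eq_C_mul_X_pow_of_X_sq_mul_iterate_derivative_add_C_mul_eq_zero hSn hn heuler
  exact ⟨by rw [hVmon, hv, map_neg], S.leadingCoeff, leadingCoeff_ne_zero.mpr hS0, hSmon⟩
end
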